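/- arXiv:2411.04362 — 5 statements merged into one kernel-verified Lean document; each statement's English description precedes it below -/
import Mathlib

section
/- Philip Hall's theorem: For elements a ≤ b in a finite poset P, the Möbius function satisfies μ(a, b) = ∑_{i ≥ 0} (-1)^i · n_i, where n_i is the number of chains a = a_0 < a_1 < ... < a_i = b of length i from a to b. -/
/-!
Write `ζ = 1 + η`, where `η a b = 1` exactly when `a < b`. Since products in the incidence
algebra sum over intermediate elements, `(η ^ i) a b` counts the chains of length `i` from `a`
to `b`; in particular `η ^ |P| = 0`, as no chain has more than `|P|` elements. Hence `ζ` is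
inverted by the finite geometric series: `μ = (1 + η)⁻¹ = ∑_{i < |P|} (-η) ^ i`.
-/

open Finset

namespace IncidenceAlgebra

variable {𝕜 α : Type*}

section Chains

variable [Preorder α]

abbrev ChainFromTo (i : ℕ) (a b : α) : Type _ :=
  {c : Fin (i + 1) → α // StrictMono c ∧ c 0 = a ∧ c (Fin.last i) = b}

variable {i : ℕ} {a b : α}

lemma ChainFromTo.mem_Icc [LocallyFiniteOrder α] (c : ChainFromTo i a b) (j : Fin (i + 1)) :
    c.1 j ∈ Icc a b := by
  obtain ⟨c, hc, rfl, rfl⟩ := c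
  exact mem_Icc.2 ⟨hc.monotone (Fin.zero_le j), hc.monotone (Fin.le_last j)⟩

instance [LocallyFiniteOrder α] : Finite (ChainFromTo i a b) :=
  Finite.of_injective (fun c j ↦ (⟨c.1 j, c.mem_Icc j⟩ : Icc a b)) fun _ _ h ↦
    Subtype.ext <| funext fun j ↦ congrArg Subtype.val (congrFun h j)

lemma card_chainFromTo_zero [DecidableEq α] (a b : α) :
    Nat.card (ChainFromTo 0 a b) = if a = b then 1 else 0 := by
  split_ifs with hab
  · subst hab
    refine Nat.card_eq_one_iff_exists.2
      ⟨⟨fun _ ↦ a, Subsingleton.strictMono (α := Fin 1) _, rfl, rfl⟩, ?_⟩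
    rintro ⟨c, -, hc, -⟩
    exact Subtype.ext <| funext fun j ↦ Fin.eq_zero j ▸ hc
  · have : IsEmpty (ChainFromTo 0 a b) := ⟨fun ⟨_, _, ha, hb⟩ ↦ hab (ha.symm.trans hb)⟩
    exact Nat.card_of_isEmpty

lemma card_chainFromTo_eq_zero [Fintype α] (h : Fintype.card α ≤ i) (a b : α) :
    Nat.card (ChainFromTo i a b) = 0 := by
  have : IsEmpty (ChainFromTo i a b) := ⟨fun c ↦ by
    have := Fintype.card_le_of_injective c.1 c.2.1.injective
    rw [Fintype.card_fin] at this
    omega⟩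
  exact Nat.card_of_isEmpty

def chainFromToSuccEquiv [LocallyFiniteOrder α] (i : ℕ) (a b : α) :
    ChainFromTo (i + 1) a b ≃ Σ x : Ioc a b, ChainFromTo i x.1 b where
  toFun c := ⟨⟨c.1 1, mem_Ioc.2
      ⟨c.2.2.1.symm.trans_lt (c.2.1 Fin.zero_lt_one), (mem_Icc.1 (c.mem_Icc 1)).2⟩⟩,
    ⟨Fin.tail c.1, c.2.1.comp Fin.strictMono_succ, rfl, c.2.2.2⟩⟩
  invFun d := ⟨Fin.cons a d.2.1,
    strictMono_vecCons.2 ⟨(mem_Ioc.1 d.1.2).1.trans_eq d.2.2.2.1.symm, d.2.2.1⟩, rfl,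
    d.2.2.2.2⟩
  left_inv c := by
    obtain ⟨c, hc, rfl, -⟩ := c
    exact Subtype.ext (Fin.cons_self_tail c)
  right_inv d := by
    obtain ⟨⟨x, hx⟩, ⟨d, -, h0, -⟩⟩ := d
    exact Sigma.subtype_ext (Subtype.ext h0) rfl

lemma card_chainFromTo_succ [LocallyFiniteOrder α] (i : ℕ) (a b : α) :
    Nat.card (ChainFromTo (i + 1) a b) = ∑ x ∈ Ioc a b, Nat.card (ChainFromTo i x b) := by
  rw [Nat.card_congr (chainFromToSuccEquiv i a b), Nat.card_sigma,
    ← Finset.sum_coe_sort (Ioc a b)]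

end Chains

section StrictZeta

variable (𝕜 α) [Zero 𝕜] [One 𝕜] [Preorder α] [DecidableLT α]

def strictZeta : IncidenceAlgebra 𝕜 α :=
  ⟨fun a b ↦ if a < b then 1 else 0, fun _ _ h ↦ if_neg fun h' ↦ h h'.le⟩

variable {𝕜 α}

lemma strictZeta_apply (a b : α) : strictZeta 𝕜 α a b = if a < b then 1 else 0 := rfl

end StrictZeta

lemma sum_apply [AddCommMonoid 𝕜] [LE α] {ι : Type*} (s : Finset ι)
    (f : ι → IncidenceAlgebra 𝕜 α) (a b : α) :
    (∑ i ∈ s, f i) a b = ∑ i ∈ s, f i a b := by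
  classical
  induction s using Finset.induction_on with
  | empty => rfl
  | insert i s hi ih => rw [sum_insert hi, sum_insert hi, add_apply, ih]

lemma one_add_strictZeta [AddMonoidWithOne 𝕜] [PartialOrder α] [DecidableEq α] [DecidableLT α]
    [DecidableLE α] :
    1 + strictZeta 𝕜 α = zeta 𝕜 := by
  refine ext fun a b hab ↦ ?_
  rw [add_apply, one_apply, strictZeta_apply, zeta_of_le hab]
  obtain rfl | hlt := hab.eq_or_lt
  · simp
  · simp [hlt, hlt.ne]

section PartialOrder

variable [PartialOrder α] [LocallyFiniteOrder α] [DecidableEq α] [DecidableLT α]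

lemma strictZeta_pow_apply [Semiring 𝕜] (i : ℕ) (a b : α) :
    (strictZeta 𝕜 α ^ i) a b = Nat.card (ChainFromTo i a b) := by
  induction i generalizing a with
  | zero => simp [one_apply, card_chainFromTo_zero]
  | succ i ih =>
    rw [pow_succ', mul_apply, card_chainFromTo_succ, Nat.cast_sum]
    simp only [strictZeta_apply, ih, ite_mul, one_mul, zero_mul]
    rw [← Finset.sum_filter]
    congr 1
    ext x
    simp only [mem_filter, mem_Icc, mem_Ioc]
    exact ⟨fun h ↦ ⟨h.2, h.1.2⟩, fun h ↦ ⟨⟨h.1.le, h.2⟩, h.1⟩⟩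

lemma strictZeta_pow_card [Semiring 𝕜] [Fintype α] : strictZeta 𝕜 α ^ Fintype.card α = 0 :=
  ext fun a b _ ↦ by
    rw [strictZeta_pow_apply, card_chainFromTo_eq_zero le_rfl, Nat.cast_zero, zero_apply]

lemma mu_eq_sum_range_neg_strictZeta_pow [Ring 𝕜] [Fintype α] :
    mu 𝕜 = ∑ i ∈ range (Fintype.card α), (-strictZeta 𝕜 α) ^ i := by
  classical
  have : zeta 𝕜 * ∑ i ∈ range (Fintype.card α), (-strictZeta 𝕜 α) ^ i = 1 := by
    rw [← one_add_strictZeta, ← sub_neg_eq_add, mul_neg_geom_sum, neg_pow, strictZeta_pow_card,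
      mul_zero, sub_zero]
  rw [← mul_one (mu 𝕜), ← this, ← mul_assoc, mu_mul_zeta, one_mul]

lemma mu_apply_eq_sum_range_card_chainFromTo [Ring 𝕜] [Fintype α] (a b : α) :
    mu 𝕜 a b =
      ∑ i ∈ range (Fintype.card α), (-1) ^ i * (Nat.card (ChainFromTo i a b) : 𝕜) := by
  rw [mu_eq_sum_range_neg_strictZeta_pow, IncidenceAlgebra.sum_apply]
  refine sum_congr rfl fun i _ ↦ ?_
  rw [← strictZeta_pow_apply]
  obtain hi | hi := i.even_or_odd
  · rw [hi.neg_pow, hi.neg_one_pow, one_mul]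
  · rw [hi.neg_pow, neg_apply, hi.neg_one_pow, neg_one_mul]

end PartialOrder

end IncidenceAlgebra

theorem stmt2_general {P : Type*} [PartialOrder P] [Fintype P] [LocallyFiniteOrder P]
    [DecidableEq P] {a b : P} :
    (IncidenceAlgebra.mu ℤ a b : ℤ) =
      ∑ᶠ i : ℕ, (-1 : ℤ) ^ i *
        (Nat.card {c : Fin (i + 1) → P //
          StrictMono c ∧ c 0 = a ∧ c (Fin.last i) = b} : ℤ) := by
  classical
  have hsupp : (Function.support fun i ↦
      (-1 : ℤ) ^ i * (Nat.card (IncidenceAlgebra.ChainFromTo i a b) : ℤ)) ⊆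
        range (Fintype.card P) := Function.support_subset_iff'.2 fun i hi ↦ by
    rw [IncidenceAlgebra.card_chainFromTo_eq_zero (by simpa using hi), Nat.cast_zero, mul_zero]
  rw [finsum_eq_sum_of_support_subset _ hsupp,
    IncidenceAlgebra.mu_apply_eq_sum_range_card_chainFromTo]

/-- Philip Hall's theorem: for `a ≤ b` in a finite poset `P`,
`μ(a, b) = ∑_{i ≥ 0} (-1)^i · n_i`, where `n_i` is the number of chains
`a = a_0 < a_1 < ⋯ < a_i = b` of length `i` from `a` to `b`. -/
theorem stmt2 {P : Type*} [PartialOrder P] [Fintype P] [LocallyFiniteOrder P]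
    [DecidableEq P] {a b : P} (hab : a ≤ b) :
    (IncidenceAlgebra.mu ℤ a b : ℤ) =
      ∑ᶠ i : ℕ, (-1 : ℤ) ^ i *
        (Nat.card {c : Fin (i + 1) → P //
          StrictMono c ∧ c 0 = a ∧ c (Fin.last i) = b} : ℤ) :=
  stmt2_general
end

section
/- For a Galois connection f : P ⇄ Q : g between finite posets (f left adjoint, g right adjoint) and any function n : Q → R, the Möbius inversion over P of the pullback f^# n equals the pushforward along g of the Möbius inversion over Q of n: ∂_P(f^# n) = g_#(∂_Q n). -/
open Finset

lemma uniq_aux {P : Type*} [PartialOrder P] [Fintype P] [DecidableEq P]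
    [DecidableRel (α := P) (· ≤ ·)] {R : Type*} [CommRing R]
    (h1 h2 : P → R)
    (H : ∀ a : P, ∑ b ∈ Finset.univ.filter (fun b => a ≤ b), h1 b
        = ∑ b ∈ Finset.univ.filter (fun b => a ≤ b), h2 b) :
    ∀ a : P, h1 a = h2 a := by
  intro a
  induction a using WellFoundedGT.induction with
  | _ a ih =>
    have hsplit : (Finset.univ.filter (fun b => a ≤ b) : Finset P)
        = insert a (Finset.univ.filter (fun b => a ≤ b ∧ b ≠ a)) := by
      ext b
      by_cases hb : b = a <;> simp [hb]
    have hnot : a ∉ Finset.univ.filter (fun b => a ≤ b ∧ b ≠ a) := by simp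
    have key := H a
    rw [hsplit, Finset.sum_insert hnot, Finset.sum_insert hnot] at key
    have htail : ∑ b ∈ Finset.univ.filter (fun b => a ≤ b ∧ b ≠ a), h1 b
        = ∑ b ∈ Finset.univ.filter (fun b => a ≤ b ∧ b ≠ a), h2 b := by
      apply Finset.sum_congr rfl
      intro b hb
      simp only [Finset.mem_filter] at hb
      exact ih b (lt_of_le_of_ne hb.2.1 (Ne.symm hb.2.2))
    rw [htail] at key
    exact add_right_cancel key

/-- For a Galois connection `f : P ⇄ Q : g` between finite posets and any `n : Q → R`,
the Möbius inversion over `P` of the pullback `f^# n` equals the pushforward along `g` of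
the Möbius inversion over `Q` of `n`.  Here the Möbius inversions `∂_Q n` and `∂_P (f^# n)`
are characterized (uniquely) by the inversion identities `n x = ∑_{y : x ≤ y} (∂_Q n) y`
and `(f^# n) a = ∑_{b : a ≤ b} (∂_P (f^# n)) b`. -/
theorem stmt3 {P Q : Type*} [PartialOrder P] [Fintype P] [PartialOrder Q] [Fintype Q]
    [DecidableEq P] [DecidableRel (α := P) (· ≤ ·)] [DecidableRel (α := Q) (· ≤ ·)]
    {R : Type*} [CommRing R]
    (f : P → Q) (g : Q → P) (hf : Monotone f) (hg : Monotone g)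
    (gc : ∀ (a : P) (x : Q), f a ≤ x ↔ a ≤ g x)
    (n : Q → R) (dQn : Q → R) (dPfn : P → R)
    (hdQ : ∀ x : Q, n x = ∑ y ∈ Finset.univ.filter (fun y => x ≤ y), dQn y)
    (hdP : ∀ a : P, n (f a) = ∑ b ∈ Finset.univ.filter (fun b => a ≤ b), dPfn b) :
    ∀ a : P, dPfn a = ∑ x ∈ Finset.univ.filter (fun x => g x = a), dQn x := by
  apply uniq_aux
  intro a
  rw [← hdP a, hdQ (f a)]
  rw [Finset.sum_sigma']
  refine Finset.sum_nbij' (fun x => ⟨g x, x⟩) (fun p => p.2) ?_ ?_ ?_ ?_ ?_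
  · intro x hx
    simp only [Finset.mem_filter, Finset.mem_univ, true_and] at hx
    simp only [Finset.mem_sigma, Finset.mem_filter, Finset.mem_univ, true_and]
    exact ⟨(gc a x).mp hx, trivial⟩
  · rintro ⟨b, x⟩ hbx
    simp only [Finset.mem_sigma, Finset.mem_filter, Finset.mem_univ, true_and] at hbx ⊢
    rw [gc]
    exact le_of_le_of_eq hbx.1 hbx.2.symm
  · intro x hx; rfl
  · rintro ⟨b, x⟩ hbx
    simp only [Finset.mem_sigma, Finset.mem_filter, Finset.mem_univ, true_and] at hbx
    simp [hbx.2]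
  · intro x hx; rfl
end

section
/- Rota's Galois Connection Theorem: For a Galois connection f : P ⇄ Q : g between finite posets, for all a ∈ P and y ∈ Q, ∑_{x ∈ Q : g(x) = a} μ_Q(x, y) = ∑_{b ∈ P : f(b) = y} μ_P(a, b). -/
open Finset

/-- Rota's Galois Connection Theorem: for a Galois connection `f : P ⇄ Q : g` between
finite posets, for all `a ∈ P` and `y ∈ Q`,
`∑_{x : g(x) = a} μ_Q(x, y) = ∑_{b : f(b) = y} μ_P(a, b)`
(Möbius functions are `0` on non-comparable pairs). -/
theorem stmt4 {P Q : Type*} [PartialOrder P] [Fintype P] [PartialOrder Q] [Fintype Q]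
    [DecidableEq P] [DecidableEq Q] [LocallyFiniteOrder P] [LocallyFiniteOrder Q]
    (f : P → Q) (g : Q → P) (hf : Monotone f) (hg : Monotone g)
    (gc : ∀ (a : P) (x : Q), f a ≤ x ↔ a ≤ g x) (a : P) (y : Q) :
    ∑ x ∈ Finset.univ.filter (fun x => g x = a), (IncidenceAlgebra.mu ℤ x y : ℤ) =
      ∑ b ∈ Finset.univ.filter (fun b => f b = y), (IncidenceAlgebra.mu ℤ a b : ℤ) := by
  classical
  have key : ∀ b : P,
      (∑ x : Q, if a ≤ b ∧ f b ≤ x then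
          (IncidenceAlgebra.mu ℤ a b : ℤ) * IncidenceAlgebra.mu ℤ x y else 0)
        = if f b = y then (IncidenceAlgebra.mu ℤ a b : ℤ) else 0 := by
    intro b
    by_cases hab : a ≤ b
    · simp only [hab, true_and]
      rw [← Finset.sum_filter]
      have hsub : Finset.Icc (f b) y ⊆ Finset.univ.filter (fun x => f b ≤ x) := by
        intro x hx
        simp only [Finset.mem_filter, Finset.mem_univ, true_and]
        exact (Finset.mem_Icc.mp hx).1
      have hstep : ∑ x ∈ Finset.univ.filter (fun x => f b ≤ x),
          (IncidenceAlgebra.mu ℤ a b : ℤ) * IncidenceAlgebra.mu ℤ x y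
          = ∑ x ∈ Finset.Icc (f b) y,
              (IncidenceAlgebra.mu ℤ a b : ℤ) * IncidenceAlgebra.mu ℤ x y := by
        refine (Finset.sum_subset hsub ?_).symm
        intro x hx hx'
        have hxy : ¬ x ≤ y := fun h =>
          hx' (Finset.mem_Icc.mpr ⟨(Finset.mem_filter.mp hx).2, h⟩)
        rw [IncidenceAlgebra.apply_eq_zero_of_not_le hxy, mul_zero]
      rw [hstep, ← Finset.mul_sum, IncidenceAlgebra.sum_Icc_mu_left]
      simp [mul_ite]
    · have h0 : (IncidenceAlgebra.mu ℤ a b : ℤ) = 0 :=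
        IncidenceAlgebra.apply_eq_zero_of_not_le hab _
      simp [hab, h0]
  calc ∑ x ∈ Finset.univ.filter (fun x => g x = a), (IncidenceAlgebra.mu ℤ x y : ℤ)
      = ∑ x : Q, (if a = g x then (1:ℤ) else 0) * IncidenceAlgebra.mu ℤ x y := by
        rw [Finset.sum_filter]
        refine Finset.sum_congr rfl fun x _ => ?_
        by_cases h : g x = a
        · simp [h]
        · rw [if_neg (fun h' : a = g x => h h'.symm)]
          simp [h]
    _ = ∑ x : Q, (∑ b ∈ Finset.Icc a (g x), (IncidenceAlgebra.mu ℤ a b : ℤ))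
          * IncidenceAlgebra.mu ℤ x y := by
        refine Finset.sum_congr rfl fun x _ => ?_
        rw [IncidenceAlgebra.sum_Icc_mu_right]
    _ = ∑ x : Q, ∑ b : P, (if a ≤ b ∧ f b ≤ x then
          (IncidenceAlgebra.mu ℤ a b : ℤ) * IncidenceAlgebra.mu ℤ x y else 0) := by
        refine Finset.sum_congr rfl fun x _ => ?_
        rw [Finset.sum_mul]
        rw [show (Finset.Icc a (g x)) =
            Finset.univ.filter (fun b => a ≤ b ∧ f b ≤ x) from ?_]
        · rw [Finset.sum_filter]
        · ext b
          simp [Finset.mem_Icc, gc b x]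
    _ = ∑ b : P, ∑ x : Q, (if a ≤ b ∧ f b ≤ x then
          (IncidenceAlgebra.mu ℤ a b : ℤ) * IncidenceAlgebra.mu ℤ x y else 0) :=
        Finset.sum_comm
    _ = ∑ b : P, (if f b = y then (IncidenceAlgebra.mu ℤ a b : ℤ) else 0) :=
        Finset.sum_congr rfl fun b _ => key b
    _ = ∑ b ∈ Finset.univ.filter (fun b => f b = y), (IncidenceAlgebra.mu ℤ a b : ℤ) :=
        (Finset.sum_filter _ _).symm
end

section
/- Let P be a finite poset, C a complete abelian closed symmetric monoidal category, M a P-module, and N ≅ ∏_{a ∈ P} X_a^{↓a} a cofree P-module. Then Hom̲(M, N) ≅ ∏_{a ∈ P} IHom(M(a), X_a). -/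
open CategoryTheory CategoryTheory.Limits CategoryTheory.MonoidalCategory Opposite

universe v u

variable {P : Type} [PartialOrder P] {C : Type u} [Category.{v} C]

open Classical ZeroObject in
/-- The principal cofree `P`-module `X^{↓a}`: equal to `X` at all `b ≤ a`, with identity
structure maps there, and `0` elsewhere. -/
noncomputable def below [HasZeroObject C] [HasZeroMorphisms C] (a : P) (X : C) : P ⥤ C where
  obj b := if b ≤ a then X else 0
  map {b c} h :=
    if hc : c ≤ a then
      eqToHom (show (if b ≤ a then X else 0) = (if c ≤ a then X else 0) by
        rw [if_pos ((leOfHom h).trans hc), if_pos hc])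
    else 0
  map_id b := by
    try dsimp only
    split_ifs with h
    · simp
    · exact (((Limits.isZero_zero C).of_iso (eqToIso (if_neg h))).eq_of_src _ _)
  map_comp {b c d} h h' := by
    try dsimp only
    by_cases hd : d ≤ a
    · have hc : c ≤ a := (leOfHom h').trans hd
      simp [dif_pos hd, dif_pos hc]
    · simp [dif_neg hd]

/-- The integrand `(a, b) ↦ IHom(M a, N b)` of the end defining the enriched hom. -/
def integrand [MonoidalCategory C] [MonoidalClosed C] (M N : P ⥤ C) : Pᵒᵖ ⥤ P ⥤ C :=
  M.op ⋙ MonoidalClosed.internalHom ⋙ (Functor.whiskeringLeft P C C).obj N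

/-- The enriched hom `Hom̲(M, N) := ∫_{a ∈ P} IHom(M a, N a)`. -/
noncomputable def ehom [MonoidalCategory C] [MonoidalClosed C] [HasLimits C]
    (M N : P ⥤ C) : C :=
  end_ (integrand M N)

/-!
`Hom̲(M, -)` is right adjoint to the copower `T ↦ (b ↦ M b ⊗ T)`: by currying, a natural
transformation `M ⊗ T ⟶ N` is exactly a wedge `T ⟶ IHom(M b, N b)` over the end. Hence
`Hom̲(M, -)` preserves products. On a principal cofree module, `X^{↓a}` is right adjoint to
evaluation at `a`, so `Hom̲(M, X^{↓a})` and `IHom(M a, X)` are both right adjoint to `M a ⊗ -`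
and therefore agree.
-/

section Below

variable [HasZeroObject C] [HasZeroMorphisms C]

lemma below_obj_of_le {a b : P} (h : b ≤ a) (X : C) : (below a X).obj b = X :=
  if_pos h

lemma isZero_below_obj_of_not_le {a b : P} (h : ¬ b ≤ a) (X : C) :
    IsZero ((below a X).obj b) := by
  simp only [below, if_neg h]
  exact isZero_zero C

lemma below_map_of_le {a b c : P} (hc : c ≤ a) (h : b ⟶ c) (X : C) :
    (below a X).map h = eqToHom ((below_obj_of_le (h.le.trans hc) X).trans
      (below_obj_of_le hc X).symm) := by
  simp [below, dif_pos hc]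

open Classical in
noncomputable def homBelowEquiv (a : P) (F : P ⥤ C) (X : C) :
    (F.obj a ⟶ X) ≃ (F ⟶ below a X) where
  toFun f :=
    { app b := if h : b ≤ a then F.map h.hom ≫ f ≫ eqToHom (below_obj_of_le h X).symm else 0
      naturality b c h := by
        by_cases hc : c ≤ a
        · have hb : b ≤ a := h.le.trans hc
          rw [dif_pos hc, dif_pos hb, below_map_of_le hc, ← F.map_comp_assoc,
            Subsingleton.elim (h ≫ hc.hom) hb.hom]
          simp
        · exact (isZero_below_obj_of_not_le hc X).eq_of_tgt _ _ }
  invFun α := α.app a ≫ eqToHom (below_obj_of_le le_rfl X)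
  left_inv f := by simp
  right_inv α := by
    ext b
    by_cases hb : b ≤ a
    · have hα := α.naturality hb.hom
      rw [below_map_of_le le_rfl] at hα
      simp [dif_pos hb, reassoc_of% hα]
    · exact (isZero_below_obj_of_not_le hb X).eq_of_tgt _ _

lemma homBelowEquiv_naturality (a : P) {F F' : P ⥤ C} (X : C) (α : F' ⟶ F)
    (f : F.obj a ⟶ X) :
    homBelowEquiv a F' X (α.app a ≫ f) = α ≫ homBelowEquiv a F X f := by
  rw [← (homBelowEquiv a F' X).apply_symm_apply (α ≫ _)]
  congr 1
  simp [homBelowEquiv]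

noncomputable def belowFunctor (a : P) : C ⥤ P ⥤ C :=
  Adjunction.rightAdjointOfEquiv (F := (evaluation P C).obj a) (G_obj := below a)
    (homBelowEquiv a) fun _ _ X α f => homBelowEquiv_naturality a X α f

noncomputable def evaluationBelowAdjunction (a : P) :
    (evaluation P C).obj a ⊣ belowFunctor a :=
  Adjunction.adjunctionOfEquivRight _ _

end Below

section Ehom

variable [MonoidalCategory C] [MonoidalClosed C] [HasLimits C] (M : P ⥤ C)

open MonoidalClosed

namespace ehom

variable {M} {N : P ⥤ C}

noncomputable def π (N : P ⥤ C) (b : P) : ehom M N ⟶ (ihom (M.obj b)).obj (N.obj b) :=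
  end_.π (integrand M N) b

lemma condition {b c : P} (h : b ⟶ c) :
    π N b ≫ (ihom (M.obj b)).map (N.map h) = π N c ≫ (pre (M.map h)).app (N.obj c) :=
  end_.condition _ h

noncomputable def lift {T : C} (f : ∀ b, T ⟶ (ihom (M.obj b)).obj (N.obj b))
    (hf : ∀ ⦃b c : P⦄ (h : b ⟶ c),
      f b ≫ (ihom (M.obj b)).map (N.map h) = f c ≫ (pre (M.map h)).app (N.obj c)) :
    T ⟶ ehom M N :=
  end_.lift f hf

@[simp]
lemma lift_π {T : C} (f : ∀ b, T ⟶ (ihom (M.obj b)).obj (N.obj b))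
    (hf : ∀ ⦃b c : P⦄ (h : b ⟶ c),
      f b ≫ (ihom (M.obj b)).map (N.map h) = f c ≫ (pre (M.map h)).app (N.obj c))
    (b : P) : lift f hf ≫ π N b = f b :=
  end_.lift_π _ _ b

@[ext]
lemma hom_ext {T : C} {f g : T ⟶ ehom M N} (h : ∀ b, f ≫ π N b = g ≫ π N b) : f = g :=
  end_.hom_ext h

end ehom

@[simps]
abbrev copower : C ⥤ P ⥤ C where
  obj T :=
    { obj b := M.obj b ⊗ T
      map h := M.map h ▷ T }
  map f :=
    { app b := M.obj b ◁ f
      naturality _ _ _ := (whisker_exchange _ _).symm }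

noncomputable def copowerHomEquiv (T : C) (N : P ⥤ C) :
    ((copower M).obj T ⟶ N) ≃ (T ⟶ ehom M N) where
  toFun α := ehom.lift (fun b => curry (α.app b)) fun b c h => by
    rw [← curry_natural_right, curry_pre_app, ← α.naturality h]
  invFun g :=
    { app b := uncurry (g ≫ ehom.π N b)
      naturality b c h := by
        rw [copower_obj_map, ← uncurry_pre_app, ← uncurry_natural_right, Category.assoc,
          Category.assoc, ehom.condition] }
  left_inv α := by ext b; simp
  right_inv g := by ext b; simp

lemma copowerHomEquiv_naturality {T T' : C} (N : P ⥤ C) (f : T' ⟶ T)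
    (α : (copower M).obj T ⟶ N) :
    copowerHomEquiv M T' N ((copower M).map f ≫ α) = f ≫ copowerHomEquiv M T N α := by
  ext b
  simp [copowerHomEquiv, curry_natural_left]

noncomputable def ehomFunctor : (P ⥤ C) ⥤ C :=
  Adjunction.rightAdjointOfEquiv (G_obj := ehom M) (copowerHomEquiv M)
    fun _ _ N f α => copowerHomEquiv_naturality M N f α

noncomputable def copowerAdjunction : copower M ⊣ ehomFunctor M :=
  Adjunction.adjunctionOfEquivRight _ _

instance : (ehomFunctor M).IsRightAdjoint := (copowerAdjunction M).isRightAdjoint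

/-- `copower M ⋙ (evaluation P C).obj a` is definitionally `tensorLeft (M.obj a)`. -/
noncomputable def ehomBelowIso [HasZeroObject C] [HasZeroMorphisms C] (a : P) (X : C) :
    ehom M (below a X) ≅ (ihom (M.obj a)).obj X :=
  (((copowerAdjunction M).comp (evaluationBelowAdjunction a)).rightAdjointUniq
    (ihom.adjunction (M.obj a))).app X

end Ehom

theorem stmt11_general [Abelian C] [MonoidalCategory C] [MonoidalClosed C] [HasLimits C]
    (M N : P ⥤ C) (X : P → C)
    (hN : Nonempty (N ≅ ∏ᶜ fun a => below a (X a))) :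
    Nonempty (ehom M N ≅ ∏ᶜ fun a => (ihom (M.obj a)).obj (X a)) := by
  obtain ⟨e⟩ := hN
  exact ⟨(ehomFunctor M).mapIso e ≪≫ PreservesProduct.iso (ehomFunctor M) _ ≪≫
    Pi.mapIso fun a => ehomBelowIso M a (X a)⟩

/-- For a finite poset `P`, a complete abelian closed symmetric monoidal category `C`,
a `P`-module `M` and a cofree `P`-module `N ≅ ∏_{a ∈ P} X_a^{↓a}`:
`Hom̲(M, N) ≅ ∏_{a ∈ P} IHom(M a, X_a)`. -/
theorem stmt11 [Fintype P] [Abelian C] [MonoidalCategory C] [SymmetricCategory C]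
    [MonoidalClosed C] [HasLimits C] (M N : P ⥤ C) (X : P → C)
    (hN : Nonempty (N ≅ ∏ᶜ fun a => below a (X a))) :
    Nonempty (ehom M N ≅ ∏ᶜ fun a => (ihom (M.obj a)).obj (X a)) :=
  stmt11_general M N X hN
end

section
/- Let P be a finite poset and C an abelian category. For any injective object Q of C and c ∈ P, the principal injective P-module Q^{↓c} (equal to Q at all b ≤ c with identity maps, and 0 elsewhere) is an injective object in the functor category C^P. -/
open CategoryTheory CategoryTheory.Limits CategoryTheory.MonoidalCategory Opposite

universe v u

variable {P : Type} [PartialOrder P] {C : Type u} [Category.{v} C]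

/-
Evaluation at `c` is left adjoint to `X ↦ X^{↓c}`: a natural transformation `F ⟶ X^{↓c}` is the
same as a morphism `F c ⟶ X`. Evaluation preserves monomorphisms, so its right adjoint preserves
injective objects.
-/

namespace below

open Classical ZeroObject

variable [HasZeroObject C] [HasZeroMorphisms C] {a b : P} {X : C}

noncomputable def objIso (hb : b ≤ a) : (below a X).obj b ≅ X :=
  eqToIso (if_pos hb)

theorem isZero_obj (hb : ¬ b ≤ a) : IsZero ((below a X).obj b) :=
  (isZero_zero C).of_iso (eqToIso (if_neg hb))

theorem map_of_le {b' : P} (k : b ⟶ b') (hb' : b' ≤ a) :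
    (below a X).map k = (objIso (k.le.trans hb')).hom ≫ (objIso hb').inv := by
  simp [below, objIso, dif_pos hb']

noncomputable def lift {F : P ⥤ C} (f : F.obj a ⟶ X) : F ⟶ below a X where
  app b := if hb : b ≤ a then F.map (homOfLE hb) ≫ f ≫ (objIso hb).inv else 0
  naturality b b' k := by
    by_cases hb' : b' ≤ a
    · have hb : b ≤ a := k.le.trans hb'
      simp only [dif_pos hb, dif_pos hb', map_of_le k hb', Category.assoc, Iso.inv_hom_id_assoc,
        ← F.map_comp_assoc]
      rfl
    · exact (isZero_obj hb').eq_of_tgt _ _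

theorem comp_lift {F G : P ⥤ C} (α : F ⟶ G) (f : G.obj a ⟶ X) :
    α ≫ lift f = lift (α.app a ≫ f) := by
  ext b
  by_cases hb : b ≤ a
  · simp [lift, dif_pos hb]
  · exact (isZero_obj hb).eq_of_tgt _ _

theorem lift_app_self {F : P ⥤ C} (g : F ⟶ below a X) :
    lift (g.app a ≫ (objIso le_rfl).hom) = g := by
  ext b
  by_cases hb : b ≤ a
  · have hg := g.naturality (homOfLE hb)
    rw [map_of_le _ le_rfl] at hg
    simp only [lift, dif_pos hb, Category.assoc, reassoc_of% hg, Iso.inv_hom_id_assoc,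
      Iso.hom_inv_id, Category.comp_id]
  · exact (isZero_obj hb).eq_of_tgt _ _

end below

theorem stmt12_general [Abelian C] (Q : C) (hQ : Injective Q) (c : P) :
    Injective (below c Q) := by
  refine ⟨fun {F G} g ι _ => ?_⟩
  obtain ⟨ψ, hψ⟩ := hQ.factors (g.app c ≫ (below.objIso le_rfl).hom) (ι.app c)
  exact ⟨below.lift ψ, by rw [below.comp_lift, hψ, below.lift_app_self]⟩

/-- For a finite poset `P`, an abelian category `C`, an injective object `Q` of `C` and
`c ∈ P`, the principal injective `P`-module `Q^{↓c}` is injective in the functor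
category `C^P`. -/
theorem stmt12 [Fintype P] [Abelian C] (Q : C) (hQ : Injective Q) (c : P) :
    Injective (below c Q) :=
  stmt12_general Q hQ c
end
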